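/- Let m, h : ℝ → ℝ be smooth with m'(x) ≠ 0 at every x. Then for each x, the map t ↦ {m + t h, x}(x) (the Schwarzian derivative of m + t h evaluated at x, defined for t near 0) is differentiable at t = 0, and its derivative equals m'(x) · ∂_x( (1/m') ∂_x( (1/m') ∂_x h ) )(x) = h'''/m' − m''' h'/m'² − 3 m'' h''/m'² + 3 m''² h'/m'³ evaluated at x. That is, the Fréchet derivative of the Schwarzian derivative map m ↦ {m,x} in the direction h equals m_x · J h, where J = D(1/m_x)D(1/m_x)D is the Dorfman operator. -/

import Mathlib

/-- The Schwarzian derivative `{f,x} = f'''/f' − (3/2)(f''/f')²` of a function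
`f : ℝ → ℝ`, evaluated at `x`. -/
noncomputable def schwarzian (f : ℝ → ℝ) (x : ℝ) : ℝ :=
  deriv (deriv (deriv f)) x / deriv f x
    - (3 / 2) * (deriv (deriv f) x / deriv f x) ^ 2

private lemma smooth_deriv' {f : ℝ → ℝ} (hf : ContDiff ℝ (⊤ : ℕ∞) f) :
    ContDiff ℝ (⊤ : ℕ∞) (deriv f) := (contDiff_infty_iff_deriv.mp hf).2

set_option maxHeartbeats 1000000 in
/-- For smooth `m, h : ℝ → ℝ` with `m'` nowhere zero, at each
`x` the map `t ↦ {m + t h, x}(x)` is differentiable at `t = 0` with derivative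
`m'(x) · ∂x((1/m') ∂x((1/m') ∂x h))(x)`, which moreover equals
`h'''/m' − m''' h'/m'² − 3 m'' h''/m'² + 3 m''² h'/m'³` at `x`:
the Fréchet derivative of the Schwarzian derivative map in the direction `h`
is `m_x · J h`, with `J = D(1/m_x)D(1/m_x)D` the Dorfman operator. -/
theorem schwarzian_frechet_derivative_dorfman
    (m h : ℝ → ℝ)
    (hm : ContDiff ℝ (⊤ : ℕ∞) m) (hh : ContDiff ℝ (⊤ : ℕ∞) h)
    (hne : ∀ x, deriv m x ≠ 0) :
    ∀ x,
      HasDerivAt (fun t : ℝ => schwarzian (fun y => m y + t * h y) x)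
        (deriv m x *
          deriv (fun y => (1 / deriv m y) *
            deriv (fun z => (1 / deriv m z) * deriv h z) y) x) 0
      ∧ deriv m x *
          deriv (fun y => (1 / deriv m y) *
            deriv (fun z => (1 / deriv m z) * deriv h z) y) x
        = deriv (deriv (deriv h)) x / deriv m x
          - deriv (deriv (deriv m)) x * deriv h x / (deriv m x) ^ 2
          - 3 * deriv (deriv m) x * deriv (deriv h) x / (deriv m x) ^ 2
          + 3 * (deriv (deriv m) x) ^ 2 * deriv h x / (deriv m x) ^ 3 := by
  intro x
  have hle : ((⊤ : ℕ∞) : WithTop ℕ∞) ≠ 0 := by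
    simp
  have hm' : ContDiff ℝ (⊤ : ℕ∞) m := hm.of_le (by simp)
  have hh' : ContDiff ℝ (⊤ : ℕ∞) h := hh.of_le (by simp)
  have hm1 := smooth_deriv' hm'
  have hm2 := smooth_deriv' hm1
  have hh1 := smooth_deriv' hh'
  have hh2 := smooth_deriv' hh1
  -- pointwise HasDerivAt for the derivatives
  have hM1 : ∀ y, HasDerivAt (deriv m) (deriv (deriv m) y) y :=
    fun y => (hm1.differentiable hle y).hasDerivAt
  have hM2 : ∀ y, HasDerivAt (deriv (deriv m)) (deriv (deriv (deriv m)) y) y :=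
    fun y => (hm2.differentiable hle y).hasDerivAt
  have hH1 : ∀ y, HasDerivAt (deriv h) (deriv (deriv h) y) y :=
    fun y => (hh1.differentiable hle y).hasDerivAt
  have hH2 : ∀ y, HasDerivAt (deriv (deriv h)) (deriv (deriv (deriv h)) y) y :=
    fun y => (hh2.differentiable hle y).hasDerivAt
  -- derivative of 1 / m'
  have hinv : ∀ y, HasDerivAt (fun z => 1 / deriv m z)
      (-(deriv (deriv m) y) / (deriv m y) ^ 2) y := by
    intro y
    have := (hasDerivAt_const y (1:ℝ)).div (hM1 y) (hne y)
    convert this using 1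
    · rfl
    · rfl
    · rfl
    ring
  -- inner function g = (1/m') h'
  set g : ℝ → ℝ := fun z => (1 / deriv m z) * deriv h z with hgdef
  have hg : ∀ y, HasDerivAt g
      (-(deriv (deriv m) y) / (deriv m y) ^ 2 * deriv h y
        + (1 / deriv m y) * deriv (deriv h) y) y :=
    fun y => (hinv y).mul (hH1 y)
  have hgderiv : deriv g = fun y =>
      -(deriv (deriv m) y) / (deriv m y) ^ 2 * deriv h y
        + (1 / deriv m y) * deriv (deriv h) y :=
    funext fun y => (hg y).deriv
  -- second derivative of g at x
  have hpow : HasDerivAt (fun y => (deriv m y) ^ 2)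
      (2 * deriv m x ^ 1 * deriv (deriv m) x) x := (hM1 x).pow 2
  have hterm1 : HasDerivAt (fun y => -(deriv (deriv m) y) / (deriv m y) ^ 2 * deriv h y)
      (((-(deriv (deriv (deriv m)) x) * (deriv m x) ^ 2
          - (-(deriv (deriv m) x)) * (2 * deriv m x ^ 1 * deriv (deriv m) x))
        / ((deriv m x) ^ 2) ^ 2) * deriv h x
        + (-(deriv (deriv m) x) / (deriv m x) ^ 2) * deriv (deriv h) x) x :=
    (((hM2 x).neg.div hpow (pow_ne_zero 2 (hne x)))).mul (hH1 x)
  have hterm2 : HasDerivAt (fun y => (1 / deriv m y) * deriv (deriv h) y)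
      (-(deriv (deriv m) x) / (deriv m x) ^ 2 * deriv (deriv h) x
        + (1 / deriv m x) * deriv (deriv (deriv h)) x) x :=
    (hinv x).mul (hH2 x)
  have hDg : HasDerivAt (deriv g)
      ((((-(deriv (deriv (deriv m)) x) * (deriv m x) ^ 2
          - (-(deriv (deriv m) x)) * (2 * deriv m x ^ 1 * deriv (deriv m) x))
        / ((deriv m x) ^ 2) ^ 2) * deriv h x
        + (-(deriv (deriv m) x) / (deriv m x) ^ 2) * deriv (deriv h) x)
        + (-(deriv (deriv m) x) / (deriv m x) ^ 2 * deriv (deriv h) x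
        + (1 / deriv m x) * deriv (deriv (deriv h)) x)) x := by
    rw [hgderiv]
    exact hterm1.add hterm2
  -- outer derivative
  have hF : HasDerivAt (fun y => (1 / deriv m y) * deriv g y)
      (-(deriv (deriv m) x) / (deriv m x) ^ 2 * deriv g x
        + (1 / deriv m x) *
          ((((-(deriv (deriv (deriv m)) x) * (deriv m x) ^ 2
            - (-(deriv (deriv m) x)) * (2 * deriv m x ^ 1 * deriv (deriv m) x))
          / ((deriv m x) ^ 2) ^ 2) * deriv h x
          + (-(deriv (deriv m) x) / (deriv m x) ^ 2) * deriv (deriv h) x)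
          + (-(deriv (deriv m) x) / (deriv m x) ^ 2 * deriv (deriv h) x
          + (1 / deriv m x) * deriv (deriv (deriv h)) x))) x :=
    (hinv x).mul hDg
  -- the second (algebraic) claim
  have hEq : deriv m x *
      deriv (fun y => (1 / deriv m y) *
        deriv (fun z => (1 / deriv m z) * deriv h z) y) x
      = deriv (deriv (deriv h)) x / deriv m x
        - deriv (deriv (deriv m)) x * deriv h x / (deriv m x) ^ 2
        - 3 * deriv (deriv m) x * deriv (deriv h) x / (deriv m x) ^ 2
        + 3 * (deriv (deriv m) x) ^ 2 * deriv h x / (deriv m x) ^ 3 := by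
    rw [show (fun y => (1 / deriv m y) *
        deriv (fun z => (1 / deriv m z) * deriv h z) y)
        = fun y => (1 / deriv m y) * deriv g y from rfl]
    rw [hF.deriv, (hg x).deriv]
    have hx := hne x
    field_simp
    ring
  refine ⟨?_, hEq⟩
  -- derivatives of the perturbed function
  have e1 : ∀ t : ℝ, deriv (fun y => m y + t * h y)
      = fun y => deriv m y + t * deriv h y := by
    intro t; funext y
    rw [deriv_fun_add (hm'.differentiable hle y) ((hh'.differentiable hle y).const_mul t),
      deriv_const_mul t (hh'.differentiable hle y)]
  have e2 : ∀ t : ℝ, deriv (deriv (fun y => m y + t * h y))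
      = fun y => deriv (deriv m) y + t * deriv (deriv h) y := by
    intro t; funext y
    rw [e1 t, deriv_fun_add (hm1.differentiable hle y) ((hh1.differentiable hle y).const_mul t),
      deriv_const_mul t (hh1.differentiable hle y)]
  have e3 : ∀ t : ℝ, deriv (deriv (deriv (fun y => m y + t * h y)))
      = fun y => deriv (deriv (deriv m)) y + t * deriv (deriv (deriv h)) y := by
    intro t; funext y
    rw [e2 t, deriv_fun_add (hm2.differentiable hle y) ((hh2.differentiable hle y).const_mul t),
      deriv_const_mul t (hh2.differentiable hle y)]
  have key : (fun t : ℝ => schwarzian (fun y => m y + t * h y) x)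
      = fun t => (deriv (deriv (deriv m)) x + t * deriv (deriv (deriv h)) x)
          / (deriv m x + t * deriv h x)
        - (3 / 2) * ((deriv (deriv m) x + t * deriv (deriv h) x)
          / (deriv m x + t * deriv h x)) ^ 2 := by
    funext t
    simp only [schwarzian]
    rw [e3 t, e2 t, e1 t]
  have hden : HasDerivAt (fun t : ℝ => deriv m x + t * deriv h x) (deriv h x) 0 := by
    simpa using ((hasDerivAt_id (0:ℝ)).mul_const (deriv h x)).const_add (deriv m x)
  have hnum3 : HasDerivAt (fun t : ℝ => deriv (deriv (deriv m)) x
      + t * deriv (deriv (deriv h)) x) (deriv (deriv (deriv h)) x) 0 := by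
    simpa using ((hasDerivAt_id (0:ℝ)).mul_const (deriv (deriv (deriv h)) x)).const_add
      (deriv (deriv (deriv m)) x)
  have hnum2 : HasDerivAt (fun t : ℝ => deriv (deriv m) x
      + t * deriv (deriv h) x) (deriv (deriv h) x) 0 := by
    simpa using ((hasDerivAt_id (0:ℝ)).mul_const (deriv (deriv h) x)).const_add
      (deriv (deriv m) x)
  have hden0 : (deriv m x + (0:ℝ) * deriv h x) ≠ 0 := by simpa using hne x
  have hq3 := hnum3.div hden hden0
  have hq2 := hnum2.div hden hden0
  have hwhole := hq3.sub ((hq2.pow 2).const_mul (3/2 : ℝ))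
  rw [key]
  convert hwhole using 1
  · rfl
  · rfl
  · rfl
  rw [hEq]
  have hx := hne x
  norm_num only [Pi.div_apply, zero_mul, add_zero]
  field_simp
  ring
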